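/- arXiv:1403.5961 — 2 statements merged into one kernel-verified Lean document; each statement's English description precedes it below -/
import Mathlib

section
/- Let G be a (finite simple) graph. If G contains an induced P3 and an induced K3, then G contains an induced subgraph isomorphic to P3 ∪ K3, to the diamond, or to the paw. -/
open SimpleGraph

/-- The disjoint union `G ∪ H` of two vertex-disjoint graphs. -/
def gUnion {α β : Type*} (G : SimpleGraph α) (H : SimpleGraph β) : SimpleGraph (α ⊕ β) where
  Adj x y :=
    match x, y with
    | Sum.inl a, Sum.inl b => G.Adj a b
    | Sum.inr a, Sum.inr b => H.Adj a b
    | _, _ => False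
  symm := by refine ⟨?_⟩; rintro (a | a) (b | b) h
             · exact G.adj_symm h
             · exact h.elim
             · exact h.elim
             · exact H.adj_symm h
  loopless := by refine ⟨?_⟩; rintro (a | a) h
                 · exact G.irrefl h
                 · exact H.irrefl h

/-- The join `G ⊕ H` of two vertex-disjoint graphs: disjoint union plus all edges across. -/
def gJoin {α β : Type*} (G : SimpleGraph α) (H : SimpleGraph β) : SimpleGraph (α ⊕ β) where
  Adj x y :=
    match x, y with
    | Sum.inl a, Sum.inl b => G.Adj a b
    | Sum.inr a, Sum.inr b => H.Adj a b
    | _, _ => True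
  symm := by refine ⟨?_⟩; rintro (a | a) (b | b) h
             · exact G.adj_symm h
             · trivial
             · trivial
             · exact H.adj_symm h
  loopless := by refine ⟨?_⟩; rintro (a | a) h
                 · exact G.irrefl h
                 · exact H.irrefl h

/-- The complete graph `Kₙ`. -/
def KG (n : ℕ) : SimpleGraph (Fin n) := ⊤

/-- The edgeless graph `nK₁` on `n` vertices. -/
def EG (n : ℕ) : SimpleGraph (Fin n) := ⊥

/-- `G` contains `H`, i.e. `H` is isomorphic to an induced subgraph of `G`. -/
def Contains {α β : Type*} (G : SimpleGraph α) (H : SimpleGraph β) : Prop :=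
  Nonempty (H ↪g G)

/-- A cograph is a `P₄`-free graph. -/
def IsCograph {α : Type*} (G : SimpleGraph α) : Prop :=
  ¬ Contains G (pathGraph 4)

/-- `G` is partitionable: its vertex set splits into a part inducing a triangle-free
graph and a part inducing a `P₃`-free graph. -/
def Partitionable {α : Type*} (G : SimpleGraph α) : Prop :=
  ∃ A : Set α, (G.induce A).CliqueFree 3 ∧ ¬ Contains (G.induce Aᶜ) (pathGraph 3)

/-- `G` is monopolar: its vertex set splits into an independent set and a part
inducing a `P₃`-free graph. -/
def Monopolar {α : Type*} (G : SimpleGraph α) : Prop :=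
  ∃ A : Set α, (G.induce A).CliqueFree 2 ∧ ¬ Contains (G.induce Aᶜ) (pathGraph 3)

/-- `G` is (1,2)-partitionable: its vertex set can be partitioned into at most one
clique and at most two independent sets (equivalently, covered by them). -/
def OneTwoPartitionable {α : Type*} (G : SimpleGraph α) : Prop :=
  ∃ C S₁ S₂ : Set α, C ∪ S₁ ∪ S₂ = Set.univ ∧ G.IsClique C ∧
    (G.induce S₁).CliqueFree 2 ∧ (G.induce S₂).CliqueFree 2

/-- A threshold graph is a `(2K₂, C₄, P₄)`-free graph. -/
def IsThreshold {α : Type*} (G : SimpleGraph α) : Prop :=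
  ¬ Contains G (gUnion (KG 2) (KG 2)) ∧ ¬ Contains G (cycleGraph 4) ∧
    ¬ Contains G (pathGraph 4)

/-- The diamond `K₂ ⊕ 2K₁`. -/
def diamond := gJoin (KG 2) (EG 2)

/-- The paw `K₁ ⊕ (K₁ ∪ K₂)`. -/
def paw := gJoin (KG 1) (gUnion (KG 1) (KG 2))

/-- The butterfly `K₁ ⊕ 2K₂`. -/
def butterfly := gJoin (KG 1) (gUnion (KG 2) (KG 2))

def twoK2 := gUnion (KG 2) (KG 2)

def twoK3 := gUnion (KG 3) (KG 3)

def K2uK1 := gUnion (KG 2) (KG 1)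


/-!
Suppose `G` is diamond-free and paw-free. If `u` is adjacent to a vertex `a` of a triangle
`abc` but not to `b`, then `{a, b, c, u}` induces a diamond (if `u ~ c`) or a paw (if not).
Hence a maximal clique `K` containing a triangle has no neighbour outside `K`: a vertex
`v ∉ K` adjacent to `w ∈ K` misses some `k ∈ K`, and `w`, `k` lie in a triangle inside `K`.
The middle vertex of an induced `P₃` cannot lie in `K` (the ends would then be adjacent), so
the whole `P₃` lies outside `K` and is anticomplete to it, giving an induced `P₃ ∪ K₃`.
-/

open Function

section Embeddings

variable {α β γ : Type*} {G : SimpleGraph α} {H₁ : SimpleGraph β} {H₂ : SimpleGraph γ}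

def gUnionEmbedding (f₁ : H₁ ↪g G) (f₂ : H₂ ↪g G) (hne : ∀ i j, f₁ i ≠ f₂ j)
    (hadj : ∀ i j, ¬ G.Adj (f₁ i) (f₂ j)) : gUnion H₁ H₂ ↪g G where
  toFun := Sum.elim f₁ f₂
  inj' := f₁.injective.sumElim f₂.injective hne
  map_rel_iff' := by
    rintro (i | i) (j | j)
    · exact f₁.map_rel_iff
    · exact iff_of_false (hadj i j) id
    · exact iff_of_false (fun h => hadj j i h.symm) id
    · exact f₂.map_rel_iff

def gJoinEmbedding (f₁ : H₁ ↪g G) (f₂ : H₂ ↪g G) (hadj : ∀ i j, G.Adj (f₁ i) (f₂ j)) :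
    gJoin H₁ H₂ ↪g G where
  toFun := Sum.elim f₁ f₂
  inj' := f₁.injective.sumElim f₂.injective fun i j => (hadj i j).ne
  map_rel_iff' := by
    rintro (i | i) (j | j)
    · exact f₁.map_rel_iff
    · exact iff_of_true (hadj i j) trivial
    · exact iff_of_true (hadj j i).symm trivial
    · exact f₂.map_rel_iff

def cliqueEmbedding {n : ℕ} (v : Fin n → α) (hv : Pairwise fun i j => G.Adj (v i) (v j)) :
    KG n ↪g G where
  toFun := v
  inj' := fun _ _ hij => by_contra fun h => (hv h).ne hij
  map_rel_iff' := ⟨fun h => ne_of_apply_ne v h.ne, fun h => hv h⟩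

def indepEmbedding {n : ℕ} (v : Fin n → α) (hv : Injective v)
    (hv' : ∀ i j, ¬ G.Adj (v i) (v j)) : EG n ↪g G where
  toFun := v
  inj' := hv
  map_rel_iff' := iff_of_false (hv' _ _) id

end Embeddings

section DiamondPawFree

variable {α : Type*} {G : SimpleGraph α}

lemma contains_diamond {a b u v : α} (hab : G.Adj a b) (hua : G.Adj u a) (hub : G.Adj u b)
    (hva : G.Adj v a) (hvb : G.Adj v b) (huv : ¬ G.Adj u v) (hne : u ≠ v) :
    Contains G diamond := by
  refine ⟨gJoinEmbedding (cliqueEmbedding ![a, b] ?_) (indepEmbedding ![u, v] ?_ ?_) ?_⟩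
  · simp [Pairwise, Fin.forall_fin_two, hab, hab.symm]
  · simp [Injective, Fin.forall_fin_two, hne, hne.symm]
  · simp [Fin.forall_fin_two, huv, G.adj_comm v u]
  · exact Fin.forall_fin_two.2
      ⟨Fin.forall_fin_two.2 ⟨hua.symm, hva.symm⟩, Fin.forall_fin_two.2 ⟨hub.symm, hvb.symm⟩⟩

lemma contains_paw {a b c u : α} (hab : G.Adj a b) (hac : G.Adj a c) (hbc : G.Adj b c)
    (hua : G.Adj u a) (hub : ¬ G.Adj u b) (huc : ¬ G.Adj u c) (hb : u ≠ b) (hc : u ≠ c) :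
    Contains G paw := by
  refine ⟨gJoinEmbedding (cliqueEmbedding ![a] Subsingleton.pairwise)
    (gUnionEmbedding (cliqueEmbedding ![u] Subsingleton.pairwise) (cliqueEmbedding ![b, c] ?_)
      ?_ ?_) ?_⟩
  · simp [Pairwise, Fin.forall_fin_two, hbc, hbc.symm]
  · exact Fin.forall_fin_one.2 (Fin.forall_fin_two.2 ⟨hb, hc⟩)
  · exact Fin.forall_fin_one.2 (Fin.forall_fin_two.2 ⟨hub, huc⟩)
  · exact Fin.forall_fin_one.2 (Sum.forall.2
      ⟨Fin.forall_fin_one.2 hua.symm, Fin.forall_fin_two.2 ⟨hab, hac⟩⟩)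

lemma adj_of_adj_of_isTriangle (hd : ¬ Contains G diamond) (hp : ¬ Contains G paw)
    {a b c u : α} (hab : G.Adj a b) (hac : G.Adj a c) (hbc : G.Adj b c) (hua : G.Adj u a)
    (hb : u ≠ b) (hc : u ≠ c) : G.Adj u b := by
  by_contra hub
  by_cases huc : G.Adj u c
  · exact hd (contains_diamond hac hua huc hab.symm hbc hub hb)
  · exact hp (contains_paw hab hac hbc hua hub huc hb hc)

lemma mem_of_adj_of_maximal_isClique (hd : ¬ Contains G diamond) (hp : ¬ Contains G paw)
    {K : Set α} (hK : Maximal G.IsClique K) {a b c : α}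
    (ha : a ∈ K) (hb : b ∈ K) (hc : c ∈ K) (hab : a ≠ b) (hac : a ≠ c) (hbc : b ≠ c)
    {v w : α} (hw : w ∈ K) (hvw : G.Adj v w) : v ∈ K := by
  by_contra hv
  obtain ⟨k, hk, hvk, hnadj⟩ : ∃ k ∈ K, v ≠ k ∧ ¬ G.Adj v k := by
    by_contra! h
    exact hv (hK.2 (hK.1.insert h) (Set.subset_insert v K) (Set.mem_insert v K))
  obtain ⟨l, hl, hlw, hlk⟩ : ∃ l ∈ K, l ≠ w ∧ l ≠ k := by
    by_contra! h
    have := h a ha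
    have := h b hb
    have := h c hc
    grind +splitImp
  have hwk : w ≠ k := fun h => hnadj (h ▸ hvw)
  exact hnadj (adj_of_adj_of_isTriangle hd hp (hK.1 hw hk hwk) (hK.1 hw hl hlw.symm)
    (hK.1 hk hl hlk.symm) hvw hvk (fun h => hv (h ▸ hl)))

end DiamondPawFree

theorem stmt_0 {α : Type*} [Fintype α] (G : SimpleGraph α)
    (hP3 : Contains G (pathGraph 3)) (hK3 : Contains G (KG 3)) :
    Contains G (gUnion (pathGraph 3) (KG 3)) ∨ Contains G diamond ∨ Contains G paw := by
  by_contra! ⟨hn, hd, hp⟩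
  obtain ⟨p⟩ := hP3
  obtain ⟨f⟩ := hK3
  obtain ⟨K, hfK, hK⟩ := Finite.exists_le_maximal (isClique_range_copy_top f.toCopy)
  have hclosed {v w : α} : w ∈ K → G.Adj v w → v ∈ K :=
    mem_of_adj_of_maximal_isClique hd hp hK (hfK ⟨0, rfl⟩) (hfK ⟨1, rfl⟩) (hfK ⟨2, rfl⟩)
      (f.toCopy.injective.ne (by decide)) (f.toCopy.injective.ne (by decide))
      (f.toCopy.injective.ne (by decide))
  have hpath (i j : Fin 3) (hij : i.val + 1 = j.val) : G.Adj (p i) (p j) :=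
    p.map_rel_iff.2 (by simp [pathGraph_adj, hij])
  have hmid : p 1 ∉ K := fun h1 => by
    have hend : G.Adj (p 0) (p 2) := hK.1 (hclosed h1 (hpath 0 1 rfl))
      (hclosed h1 (hpath 1 2 rfl).symm) (p.injective.ne (by decide))
    simpa [pathGraph_adj] using p.map_rel_iff.1 hend
  have hout (i : Fin 3) : p i ∉ K := by
    fin_cases i
    · exact fun h => hmid (hclosed h (hpath 0 1 rfl).symm)
    · exact hmid
    · exact fun h => hmid (hclosed h (hpath 1 2 rfl))
  exact hn ⟨gUnionEmbedding p f (fun i j h => hout i (h ▸ hfK ⟨j, rfl⟩))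
    (fun i j h => hout i (hclosed (hfK ⟨j, rfl⟩) h))⟩
end

section
/- Let G be a cograph with no induced C4. If G contains an induced P3, an induced 2K2 and an induced K3, then G contains an induced subgraph isomorphic to P3 ∪ K3, to the butterfly, to K2 ∪ paw, or to K2 ∪ diamond. -/
open SimpleGraph

/-!
If the two edges of the induced `2K₂` lie in one component, `P₄`-freeness gives a common
neighbour of two of their ends, and it must then be adjacent to all four ends: a butterfly.
Otherwise every connected induced subgraph misses the component of one of these edges, so an
induced paw or diamond extends to `K₂ ∪ paw` or `K₂ ∪ diamond`. In a graph with neither, a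
vertex adjacent to one vertex of a triangle is adjacent to all of it, so the component of a
triangle is a clique; the induced `P₃` then lies in another component and gives `P₃ ∪ K₃`.
-/

open Sum

section Basic

variable {α β γ : Type*} {G : SimpleGraph α} {H : SimpleGraph β} {K : SimpleGraph γ}

@[simp] lemma gUnion_adj_inl_inl {a b : β} : (gUnion H K).Adj (inl a) (inl b) ↔ H.Adj a b := Iff.rfl
@[simp] lemma gUnion_adj_inr_inr {a b : γ} : (gUnion H K).Adj (inr a) (inr b) ↔ K.Adj a b := Iff.rfl
@[simp] lemma gUnion_not_adj_inl_inr {a : β} {b : γ} : ¬(gUnion H K).Adj (inl a) (inr b) := id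
@[simp] lemma gUnion_not_adj_inr_inl {a : γ} {b : β} : ¬(gUnion H K).Adj (inr a) (inl b) := id
@[simp] lemma gJoin_adj_inl_inl {a b : β} : (gJoin H K).Adj (inl a) (inl b) ↔ H.Adj a b := Iff.rfl
@[simp] lemma gJoin_adj_inr_inr {a b : γ} : (gJoin H K).Adj (inr a) (inr b) ↔ K.Adj a b := Iff.rfl
@[simp] lemma gJoin_adj_inl_inr {a : β} {b : γ} : (gJoin H K).Adj (inl a) (inr b) := trivial
@[simp] lemma gJoin_adj_inr_inl {a : γ} {b : β} : (gJoin H K).Adj (inr a) (inl b) := trivial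
@[simp] lemma KG_adj {n : ℕ} {a b : Fin n} : (KG n).Adj a b ↔ a ≠ b := Iff.rfl
@[simp] lemma EG_not_adj {n : ℕ} {a b : Fin n} : ¬(EG n).Adj a b := id

lemma gJoin_preconnected [Nonempty β] [Nonempty γ] : (gJoin H K).Preconnected := by
  have hinl (a : β) (c : γ) : (gJoin H K).Reachable (inl a) (inr c) := gJoin_adj_inl_inr.reachable
  rintro (a | a) (b | b)
  · exact (hinl a (Classical.arbitrary γ)).trans (hinl b _).symm
  · exact hinl a b
  · exact (hinl b a).symm
  · exact (hinl (Classical.arbitrary β) a).symm.trans (hinl _ b)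

lemma contains_of_adj_iff (f : β → α) (hf : Function.Injective f)
    (hadj : ∀ a b, G.Adj (f a) (f b) ↔ H.Adj a b) : Contains G H :=
  ⟨⟨⟨f, hf⟩, hadj _ _⟩⟩

lemma contains_gUnion_of_not_reachable (f : H ↪g G) (g : K ↪g G)
    (h : ∀ a b, ¬G.Reachable (f a) (g b)) : Contains G (gUnion H K) := by
  have hne (a : β) (b : γ) : f a ≠ g b := fun hab => h a b (hab ▸ .rfl)
  refine contains_of_adj_iff (Sum.elim f g) ?_ ?_
  · rintro (a | a) (b | b) hab
    · exact congrArg inl (f.injective hab)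
    · exact (hne a b hab).elim
    · exact (hne b a hab.symm).elim
    · exact congrArg inr (g.injective hab)
  · rintro (a | a) (b | b)
    · exact f.map_adj_iff
    · exact iff_of_false (fun hab => h a b hab.reachable) id
    · exact iff_of_false (fun hab => h b a hab.reachable.symm) id
    · exact g.map_adj_iff

def SimpleGraph.Adj.embeddingKG2 {p q : α} (h : G.Adj p q) : KG 2 ↪g G where
  toFun := ![p, q]
  inj' := by
    intro i j hij
    fin_cases i <;> fin_cases j <;> simp_all [h.ne, h.ne.symm]
  map_rel_iff' := by
    intro i j
    change G.Adj (![p, q] i) (![p, q] j) ↔ (KG 2).Adj i j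
    fin_cases i <;> fin_cases j <;> simp [h, h.symm]

lemma exists_adj_not_reachable (f : twoK2 ↪g G) (hf : ¬G.Reachable (f (inl 0)) (f (inr 0)))
    (v : α) : ∃ p q, G.Adj p q ∧ ¬G.Reachable v p := by
  by_cases hv : G.Reachable v (f (inl 0))
  · exact ⟨f (inr 0), f (inr 1), f.map_adj_iff.2 (by simp [twoK2]),
      fun h => hf (hv.symm.trans h)⟩
  · exact ⟨f (inl 0), f (inl 1), f.map_adj_iff.2 (by simp [twoK2]), hv⟩

lemma contains_gUnion_KG_two (hH : H.Preconnected) (g : H ↪g G) {b : β} {p q : α}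
    (hpq : G.Adj p q) (hp : ¬G.Reachable (g b) p) : Contains G (gUnion (KG 2) H) := by
  have hpe (i : Fin 2) : G.Reachable p (hpq.embeddingKG2 i) := by
    fin_cases i
    exacts [.rfl, hpq.reachable]
  exact contains_gUnion_of_not_reachable hpq.embeddingKG2 g fun i a h =>
    hp ((hpe i).trans (h.trans ((hH a b).map g.toHom))).symm

end Basic

section Witnesses

variable {α : Type*} {G : SimpleGraph α}

lemma contains_pathGraph_four_of_adj {p q r s : α} (hpq : G.Adj p q) (hqr : G.Adj q r)
    (hrs : G.Adj r s) (hpr : ¬G.Adj p r) (hps : ¬G.Adj p s) (hqs : ¬G.Adj q s) :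
    Contains G (pathGraph 4) := by
  refine contains_of_adj_iff ![p, q, r, s] ?_ ?_
  · intro i j hij
    fin_cases i <;> fin_cases j <;> simp_all [G.adj_comm]
  · intro i j
    fin_cases i <;> fin_cases j <;> simp_all [pathGraph_adj, G.adj_comm]

lemma contains_paw_of_adj {h s m n : α} (hhs : G.Adj h s) (hhm : G.Adj h m) (hhn : G.Adj h n)
    (hmn : G.Adj m n) (hsm : ¬G.Adj s m) (hsn : ¬G.Adj s n) : Contains G paw := by
  refine contains_of_adj_iff (Sum.elim ![h] (Sum.elim ![s] ![m, n])) ?_ ?_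
  · rintro (i | i | i) (j | j | j) hij <;> fin_cases i <;> fin_cases j <;> simp_all [G.adj_comm]
  · rintro (i | i | i) (j | j | j) <;> fin_cases i <;> fin_cases j <;>
      simp_all [paw, G.adj_comm]

lemma contains_diamond_of_adj {a b s t : α} (hab : G.Adj a b) (has : G.Adj a s)
    (hat : G.Adj a t) (hbs : G.Adj b s) (hbt : G.Adj b t) (hst : ¬G.Adj s t) (hne : s ≠ t) :
    Contains G diamond := by
  refine contains_of_adj_iff (Sum.elim ![a, b] ![s, t]) ?_ ?_
  · rintro (i | i) (j | j) hij <;> fin_cases i <;> fin_cases j <;> simp_all [G.adj_comm]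
  · rintro (i | i) (j | j) <;> fin_cases i <;> fin_cases j <;> simp_all [diamond, G.adj_comm]

lemma contains_butterfly_of_adj {e a b c d : α} (hea : G.Adj e a) (heb : G.Adj e b)
    (hec : G.Adj e c) (hed : G.Adj e d) (hab : G.Adj a b) (hcd : G.Adj c d)
    (hac : ¬G.Adj a c) (had : ¬G.Adj a d) (hbc : ¬G.Adj b c) (hbd : ¬G.Adj b d) :
    Contains G butterfly := by
  refine contains_of_adj_iff (Sum.elim ![e] (Sum.elim ![a, b] ![c, d])) ?_ ?_
  · rintro (i | i | i) (j | j | j) hij <;> fin_cases i <;> fin_cases j <;> simp_all [G.adj_comm]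
  · rintro (i | i | i) (j | j | j) <;> fin_cases i <;> fin_cases j <;>
      simp_all [butterfly, G.adj_comm]

end Witnesses

section Cograph

variable {α : Type*} {G : SimpleGraph α}

lemma IsCograph.exists_adj_adj_of_reachable (hG : IsCograph G) {a c : α} (hac : G.Reachable a c)
    (hne : a ≠ c) (hnadj : ¬G.Adj a c) : ∃ e, G.Adj a e ∧ G.Adj e c := by
  obtain ⟨p⟩ := hac
  induction p with
  | nil => exact (hne rfl).elim
  | @cons a b c hab p ih =>
    by_cases hbc : G.Adj b c
    · exact ⟨b, hab, hbc⟩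
    have hbc' : b ≠ c := by rintro rfl; exact hnadj hab
    obtain ⟨f, hbf, hfc⟩ := ih hbc' hbc
    by_cases haf : G.Adj a f
    · exact ⟨f, haf, hfc⟩
    exact (hG (contains_pathGraph_four_of_adj hab hbf hfc haf hnadj hbc)).elim

lemma IsCograph.contains_butterfly (hG : IsCograph G) (f : twoK2 ↪g G)
    (hreach : G.Reachable (f (inl 0)) (f (inr 0))) : Contains G butterfly := by
  have hadj (i j) : G.Adj (f i) (f j) ↔ twoK2.Adj i j := f.map_adj_iff
  have hab : G.Adj (f (inl 0)) (f (inl 1)) := (hadj _ _).2 (by simp [twoK2])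
  have hcd : G.Adj (f (inr 0)) (f (inr 1)) := (hadj _ _).2 (by simp [twoK2])
  have hac : ¬G.Adj (f (inl 0)) (f (inr 0)) := fun h => by simpa [twoK2] using (hadj _ _).1 h
  have had : ¬G.Adj (f (inl 0)) (f (inr 1)) := fun h => by simpa [twoK2] using (hadj _ _).1 h
  have hbc : ¬G.Adj (f (inl 1)) (f (inr 0)) := fun h => by simpa [twoK2] using (hadj _ _).1 h
  have hbd : ¬G.Adj (f (inl 1)) (f (inr 1)) := fun h => by simpa [twoK2] using (hadj _ _).1 h
  obtain ⟨e, hae, hec⟩ := hG.exists_adj_adj_of_reachable hreach (f.injective.ne (by simp)) hac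
  have heb : G.Adj e (f (inl 1)) := by
    by_contra heb
    exact hG (contains_pathGraph_four_of_adj hab.symm hae hec (heb ∘ G.adj_symm) hbc hac)
  have hed : G.Adj e (f (inr 1)) := by
    by_contra hed
    exact hG (contains_pathGraph_four_of_adj hae hec hcd hac had hed)
  exact contains_butterfly_of_adj hae.symm heb hec hed hab hcd hac had hbc hbd

end Cograph

section PawDiamondFree

variable {α : Type*} {G : SimpleGraph α}

lemma adj_of_adj_of_triangle (hpaw : ¬Contains G paw) (hdia : ¬Contains G diamond)
    {x y z t : α} (hxy : G.Adj x y) (hxz : G.Adj x z) (hyz : G.Adj y z) (hxt : G.Adj x t) (hty : t ≠ y) :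
    G.Adj t y := by
  by_contra hnty
  by_cases htz : G.Adj t z
  · exact hdia (contains_diamond_of_adj hxz hxy hxt hyz.symm htz.symm (hnty ∘ G.adj_symm)
      hty.symm)
  · exact hpaw (contains_paw_of_adj hxt hxy hxz hyz hnty htz)

lemma isClique_neighborSet_of_triangle (hpaw : ¬Contains G paw) (hdia : ¬Contains G diamond)
    {x y z : α} (hxy : G.Adj x y) (hxz : G.Adj x z) (hyz : G.Adj y z) :
    G.IsClique (G.neighborSet x) := by
  intro t (hxt : G.Adj x t) t' (hxt' : G.Adj x t') htt'
  by_cases hty : t = y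
  · subst hty
    exact (adj_of_adj_of_triangle hpaw hdia hxt hxz hyz hxt' htt'.symm).symm
  · have hty' := adj_of_adj_of_triangle hpaw hdia hxy hxz hyz hxt hty
    exact (adj_of_adj_of_triangle hpaw hdia hxt hxy hty' hxt' htt'.symm).symm

lemma isClique_setOf_reachable_of_triangle (hpaw : ¬Contains G paw)
    (hdia : ¬Contains G diamond) {x y z : α} (hxy : G.Adj x y) (hxz : G.Adj x z)
    (hyz : G.Adj y z) : G.IsClique {w | G.Reachable x w} := by
  have hN := isClique_neighborSet_of_triangle hpaw hdia hxy hxz hyz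
  have hclosed {w : α} (hw : G.Reachable x w) : w = x ∨ G.Adj x w := by
    rw [reachable_iff_reflTransGen] at hw
    induction hw with
    | refl => exact .inl rfl
    | @tail w w' _ hww' ih =>
      rcases ih with rfl | hxw
      · exact .inr hww'
      by_cases hw'x : w' = x
      · exact .inl hw'x
      obtain ⟨v, hxv, hwv⟩ : ∃ v, G.Adj x v ∧ G.Adj w v := by
        by_cases hwy : w = y
        · exact ⟨z, hxz, hwy ▸ hyz⟩
        · exact ⟨y, hxy, hN hxw hxy hwy⟩
      exact .inr (isClique_neighborSet_of_triangle hpaw hdia hxw.symm hwv hxv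
        hxw.symm hww' (Ne.symm hw'x))
  intro u hu w hw huw
  rcases hclosed hu with rfl | hxu <;> rcases hclosed hw with rfl | hxw
  · exact (huw rfl).elim
  · exact hxw
  · exact hxu.symm
  · exact hN hxu hxw huw

lemma contains_gUnion_pathGraph_three_KG_three (hpaw : ¬Contains G paw)
    (hdia : ¬Contains G diamond) (fP : pathGraph 3 ↪g G) (fT : KG 3 ↪g G) :
    Contains G (gUnion (pathGraph 3) (KG 3)) := by
  have hT (i j : Fin 3) (hij : i ≠ j) : G.Adj (fT i) (fT j) := fT.map_adj_iff.2 hij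
  have hclique := isClique_setOf_reachable_of_triangle hpaw hdia
    (hT 0 1 (by decide)) (hT 0 2 (by decide)) (hT 1 2 (by decide))
  refine contains_gUnion_of_not_reachable fP fT fun a b hab => ?_
  have hreach (i : Fin 3) : G.Reachable (fT 0) (fP i) :=
    ((preconnected_top 0 b).map fT.toHom).trans
      (hab.symm.trans ((pathGraph_preconnected 3 a i).map fP.toHom))
  have h02 : ¬G.Adj (fP 0) (fP 2) := fun h => by simpa [pathGraph_adj] using fP.map_adj_iff.1 h
  exact h02 (hclique (hreach 0) (hreach 2) (fP.injective.ne (by decide)))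

end PawDiamondFree

theorem stmt_2_general {α : Type*} (G : SimpleGraph α) (hcog : IsCograph G)
    (hP3 : Contains G (pathGraph 3)) (h2K2 : Contains G twoK2) (hK3 : Contains G (KG 3)) :
    Contains G (gUnion (pathGraph 3) (KG 3)) ∨ Contains G butterfly ∨
      Contains G (gUnion (KG 2) paw) ∨ Contains G (gUnion (KG 2) diamond) := by
  obtain ⟨f⟩ := h2K2
  by_cases hreach : G.Reachable (f (inl 0)) (f (inr 0))
  · exact .inr (.inl (hcog.contains_butterfly f hreach))
  have far := exists_adj_not_reachable f hreach
  by_cases hpaw : Contains G paw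
  · obtain ⟨g⟩ := hpaw
    obtain ⟨p, q, hpq, hp⟩ := far (g (inl 0))
    exact .inr (.inr (.inl (contains_gUnion_KG_two gJoin_preconnected g hpq hp)))
  by_cases hdia : Contains G diamond
  · obtain ⟨g⟩ := hdia
    obtain ⟨p, q, hpq, hp⟩ := far (g (inl 0))
    exact .inr (.inr (.inr (contains_gUnion_KG_two gJoin_preconnected g hpq hp)))
  obtain ⟨fP⟩ := hP3
  obtain ⟨fT⟩ := hK3
  exact .inl (contains_gUnion_pathGraph_three_KG_three hpaw hdia fP fT)

theorem stmt_2 {α : Type*} [Fintype α] (G : SimpleGraph α) (hcog : IsCograph G)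
    (hC4 : ¬ Contains G (cycleGraph 4))
    (hP3 : Contains G (pathGraph 3)) (h2K2 : Contains G twoK2) (hK3 : Contains G (KG 3)) :
    Contains G (gUnion (pathGraph 3) (KG 3)) ∨ Contains G butterfly ∨
      Contains G (gUnion (KG 2) paw) ∨ Contains G (gUnion (KG 2) diamond) :=
  stmt_2_general G hcog hP3 h2K2 hK3
end
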